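/- arXiv:2302.09861 — 7 statements merged into one kernel-verified Lean document; each statement's English description precedes it below -/
import Mathlib

section
/- (Theorem 1, part 1.) Let f be a contest production function, C a cost function, and consider a semi-symmetric conflict network with size set K, multiplicities d_k > 0 and prizes v_k > 0. Let (x_k*)_{k∈K} be a positive solution of the DE first-order system and x^u > 0 a solution of the UE first-order equation. If h(x) = f(x)/f'(x) is convex on (0,∞), then the total effort under DE does not exceed that under UE: Σ_{k∈K} d_k x_k* ≤ (Σ_{k∈K} d_k) x^u. -/
set_option maxHeartbeats 1000000 in
/-- Theorem 1, part 1: if h = f/f' is convex on (0,∞), total effort under DE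
does not exceed total effort under UE. -/
theorem de_le_ue_of_convex
    (f : ℝ → ℝ)
    (hf0 : f 0 = 0)
    (hf_diff : ∀ x > (0 : ℝ), DifferentiableAt ℝ f x)
    (hf'_diff : ∀ x > (0 : ℝ), DifferentiableAt ℝ (deriv f) x)
    (hf'_pos : ∀ x > (0 : ℝ), 0 < deriv f x)
    (hf''_nonpos : ∀ x > (0 : ℝ), deriv (deriv f) x ≤ 0)
    (C : ℝ → ℝ)
    (hC_smooth : ContDiffOn ℝ 2 C (Set.Ici (0 : ℝ)))
    (hC_mono : StrictMonoOn C (Set.Ici (0 : ℝ)))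
    (hC_conv : ConvexOn ℝ (Set.Ici (0 : ℝ)) C)
    (hC'_pos : ∀ μ > (0 : ℝ), 0 < deriv C μ)
    (K : Finset ℕ) (hK : K.Nonempty) (hK2 : ∀ k ∈ K, 2 ≤ k)
    (d v : ℕ → ℝ) (hd : ∀ k ∈ K, 0 < d k) (hv : ∀ k ∈ K, 0 < v k)
    (xs : ℕ → ℝ) (hxs : ∀ k ∈ K, 0 < xs k)
    (hDE : ∀ k ∈ K, v k * (((k : ℝ) - 1) / (k : ℝ) ^ 2) * (deriv f (xs k) / f (xs k))
      = deriv C (∑ ℓ ∈ K, d ℓ * xs ℓ))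
    (xu : ℝ) (hxu : 0 < xu)
    (hUE : (∑ ℓ ∈ K, d ℓ * v ℓ * (((ℓ : ℝ) - 1) / (ℓ : ℝ) ^ 2)) * (deriv f xu / f xu)
      = deriv C ((∑ ℓ ∈ K, d ℓ) * xu) * (∑ ℓ ∈ K, d ℓ))
    (hconv : ConvexOn ℝ (Set.Ioi (0 : ℝ)) (fun x => f x / deriv f x)) :
    ∑ k ∈ K, d k * xs k ≤ (∑ k ∈ K, d k) * xu := by
  set h : ℝ → ℝ := fun x => f x / deriv f x with hh
  set X : ℝ := ∑ k ∈ K, d k * xs k with hXdef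
  set D : ℝ := ∑ k ∈ K, d k with hDdef
  clear_value h X D
  have hD : 0 < D := by rw [hDdef]; exact Finset.sum_pos hd hK
  have hX : 0 < X := by rw [hXdef]; exact Finset.sum_pos (fun k hk => mul_pos (hd k hk) (hxs k hk)) hK
  have hα : ∀ k ∈ K, 0 < ((k : ℝ) - 1) / (k : ℝ) ^ 2 := by
    intro k hk
    have h2 : (2 : ℝ) ≤ (k : ℝ) := by exact_mod_cast hK2 k hk
    apply div_pos (by linarith) (by positivity)
  have hC'X : 0 < deriv C X := hC'_pos X hX
  have hC'u : 0 < deriv C (D * xu) := hC'_pos _ (mul_pos hD hxu)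
  -- positivity of f at the solution points
  have fx_pos : ∀ k ∈ K, 0 < f (xs k) := by
    intro k hk
    have e := hDE k hk
    have hva : 0 < v k * (((k : ℝ) - 1) / (k : ℝ) ^ 2) := mul_pos (hv k hk) (hα k hk)
    have hratio : 0 < deriv f (xs k) / f (xs k) := by
      by_contra hle
      push_neg at hle
      nlinarith
    have hf' : 0 < deriv f (xs k) := hf'_pos _ (hxs k hk)
    by_contra hle
    push_neg at hle
    have : deriv f (xs k) / f (xs k) ≤ 0 :=
      div_nonpos_iff.mpr (Or.inl ⟨hf'.le, hle⟩)
    linarith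
  have hS : 0 < ∑ ℓ ∈ K, d ℓ * v ℓ * (((ℓ : ℝ) - 1) / (ℓ : ℝ) ^ 2) :=
    Finset.sum_pos (fun k hk => mul_pos (mul_pos (hd k hk) (hv k hk)) (hα k hk)) hK
  have fxu_pos : 0 < f xu := by
    have hf' : 0 < deriv f xu := hf'_pos _ hxu
    have hratio : 0 < deriv f xu / f xu := by
      by_contra hle
      push_neg at hle
      nlinarith [mul_pos hC'u hD]
    by_contra hle
    push_neg at hle
    have : deriv f xu / f xu ≤ 0 := div_nonpos_iff.mpr (Or.inl ⟨hf'.le, hle⟩)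
    linarith
  -- rewrite DE as v α = C'(X) h(x_k)
  have hk_eq : ∀ k ∈ K, v k * (((k : ℝ) - 1) / (k : ℝ) ^ 2) = deriv C X * h (xs k) := by
    intro k hk
    have e := hDE k hk
    have hfne : f (xs k) ≠ 0 := (fx_pos k hk).ne'
    have hf'ne : deriv f (xs k) ≠ 0 := (hf'_pos _ (hxs k hk)).ne'
    have hcancel : (deriv f (xs k) / f (xs k)) * (f (xs k) / deriv f (xs k)) = 1 := by
      rw [div_mul_div_comm, div_eq_one_iff_eq (by positivity)]; ring
    rw [hh]
    dsimp only
    rw [← e, mul_assoc, hcancel, mul_one]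
  -- rewrite UE as S = C'(D xu) D h(xu)
  have hue_eq : (∑ ℓ ∈ K, d ℓ * v ℓ * (((ℓ : ℝ) - 1) / (ℓ : ℝ) ^ 2))
      = deriv C (D * xu) * D * h xu := by
    have hfne : f xu ≠ 0 := fxu_pos.ne'
    have hf'ne : deriv f xu ≠ 0 := (hf'_pos _ hxu).ne'
    have hcancel : (deriv f xu / f xu) * (f xu / deriv f xu) = 1 := by
      rw [div_mul_div_comm, div_eq_one_iff_eq (by positivity)]; ring
    rw [hh]
    dsimp only
    rw [← hUE, mul_assoc, hcancel, mul_one]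
  -- sum of DE relations
  have hsum : (∑ ℓ ∈ K, d ℓ * v ℓ * (((ℓ : ℝ) - 1) / (ℓ : ℝ) ^ 2))
      = deriv C X * ∑ k ∈ K, d k * h (xs k) := by
    rw [Finset.mul_sum]
    refine Finset.sum_congr rfl fun k hk => ?_
    rw [mul_assoc, hk_eq k hk]; ring
  -- Jensen's inequality
  have hμmem : ∀ k ∈ K, xs k ∈ Set.Ioi (0:ℝ) := fun k hk => hxs k hk
  have hJ := hconv.map_centerMass_le (t := K) (w := d) (p := xs)
      (fun k hk => (hd k hk).le) (by rw [← hDdef]; exact hD) hμmem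
  have hcm : K.centerMass d xs = D⁻¹ * X := by
    simp [Finset.centerMass, hXdef, hDdef, smul_eq_mul]
  have hcm2 : K.centerMass d (h ∘ xs) = D⁻¹ * ∑ k ∈ K, d k * h (xs k) := by
    rw [Finset.centerMass, ← hDdef]
    simp [smul_eq_mul, Function.comp]
  rw [hcm, hcm2] at hJ
  -- now argue by contradiction
  by_contra hcon
  push_neg at hcon
  set μ : ℝ := D⁻¹ * X with hμdef
  have hμx : xu < μ := by
    rw [hμdef]
    rw [lt_inv_mul_iff₀ hD]
    exact hcon
  have hμpos : 0 < μ := lt_trans hxu hμx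
  -- C differentiable at positive points
  have hCdiff : ∀ y : ℝ, 0 < y → DifferentiableAt ℝ C y := by
    intro y hy
    have := (hC_smooth.differentiableOn (by norm_num)).differentiableAt
      (Filter.mem_of_superset (Ioi_mem_nhds hy) Set.Ioi_subset_Ici_self)
    exact this
  -- monotonicity of C' from convexity
  have hC'mono : deriv C (D * xu) ≤ deriv C X := by
    have h1 := hC_conv.deriv_le_slope (Set.mem_Ici.mpr (mul_pos hD hxu).le)
      (Set.mem_Ici.mpr hX.le) (by rw [hμdef] at hμx; nlinarith [(lt_inv_mul_iff₀ hD).mp hμx])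
      (hCdiff _ (mul_pos hD hxu))
    have h2 := hC_conv.slope_le_deriv (Set.mem_Ici.mpr (mul_pos hD hxu).le)
      (Set.mem_Ici.mpr hX.le) (by nlinarith [(lt_inv_mul_iff₀ hD).mp hμx])
      (hCdiff _ hX)
    linarith
  -- f strictly monotone on (0,∞)
  have hfmono : StrictMonoOn f (Set.Ioi 0) := by
    apply strictMonoOn_of_deriv_pos (convex_Ioi 0)
    · exact fun x hx => (hf_diff x hx).continuousAt.continuousWithinAt
    · rw [interior_Ioi]; exact fun x hx => hf'_pos x hx
  have hfpos_ge : ∀ x : ℝ, xu ≤ x → 0 < f x := by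
    intro x hxge
    rcases eq_or_lt_of_le hxge with rfl | hlt
    · exact fxu_pos
    · exact lt_trans fxu_pos (hfmono hxu (lt_trans hxu hlt) hlt)
  -- h strictly monotone on [xu, μ]
  have hhmono : StrictMonoOn h (Set.Icc xu μ) := by
    apply strictMonoOn_of_deriv_pos (convex_Icc xu μ)
    · intro x hx
      have hx0 : 0 < x := lt_of_lt_of_le hxu hx.1
      have : DifferentiableAt ℝ h x := by
        rw [hh]
        exact (hf_diff x hx0).div (hf'_diff x hx0) (hf'_pos x hx0).ne'
      exact this.continuousAt.continuousWithinAt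
    · rw [interior_Icc]
      intro x hx
      have hx0 : 0 < x := lt_trans hxu hx.1
      have hf' : 0 < deriv f x := hf'_pos x hx0
      have hfx : 0 < f x := hfpos_ge x hx.1.le
      have hf'' : deriv (deriv f) x ≤ 0 := hf''_nonpos x hx0
      have hder : deriv h x =
          (deriv f x * deriv f x - f x * deriv (deriv f) x) / (deriv f x) ^ 2 := by
        rw [hh]
        exact deriv_div (hf_diff x hx0) (hf'_diff x hx0) hf'.ne'
      rw [hder]
      have hnum : 0 < deriv f x * deriv f x - f x * deriv (deriv f) x := by nlinarith
      positivity
  have hhlt : h xu < h μ := hhmono (Set.left_mem_Icc.mpr hμx.le)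
    (Set.right_mem_Icc.mpr hμx.le) hμx
  have hhxu : 0 < h xu := by rw [hh]; exact div_pos fxu_pos (hf'_pos _ hxu)
  -- combine everything
  have key : deriv C X * (D * h μ) ≤ deriv C (D * xu) * D * h xu := by
    have := hJ
    calc deriv C X * (D * h μ) ≤ deriv C X * ∑ k ∈ K, d k * h (xs k) := by
          have : D * h μ ≤ ∑ k ∈ K, d k * h (xs k) := by
            have := mul_le_mul_of_nonneg_left hJ hD.le
            rw [mul_inv_cancel_left₀ hD.ne'] at this
            linarith [this]
          nlinarith
      _ = deriv C (D * xu) * D * h xu := by rw [← hsum, hue_eq]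
  have t1 := mul_lt_mul_of_pos_left hhlt (mul_pos hC'u hD)
  have t2 := mul_le_mul_of_nonneg_right hC'mono
    (mul_nonneg hD.le (lt_trans hhxu hhlt).le)
  nlinarith [key, t1, t2]
end

section
/- (Theorem 1, part 2.) Let f be a contest production function, C a cost function, and consider a semi-symmetric conflict network with size set K, multiplicities d_k > 0 and prizes v_k > 0. Let (x_k*)_{k∈K} be a positive solution of the DE first-order system and x^u > 0 a solution of the UE first-order equation. If h(x) = f(x)/f'(x) is concave on (0,∞), then the total effort under DE is not less than that under UE: Σ_{k∈K} d_k x_k* ≥ (Σ_{k∈K} d_k) x^u. -/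
/-- Theorem 1, part 2: if h = f/f' is concave on (0,∞), total effort under DE
is not less than total effort under UE. -/
theorem de_ge_ue_of_concave
    (f : ℝ → ℝ)
    (hf0 : f 0 = 0)
    (hf_diff : ∀ x > (0 : ℝ), DifferentiableAt ℝ f x)
    (hf'_diff : ∀ x > (0 : ℝ), DifferentiableAt ℝ (deriv f) x)
    (hf'_pos : ∀ x > (0 : ℝ), 0 < deriv f x)
    (hf''_nonpos : ∀ x > (0 : ℝ), deriv (deriv f) x ≤ 0)
    (C : ℝ → ℝ)
    (hC_smooth : ContDiffOn ℝ 2 C (Set.Ici (0 : ℝ)))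
    (hC_mono : StrictMonoOn C (Set.Ici (0 : ℝ)))
    (hC_conv : ConvexOn ℝ (Set.Ici (0 : ℝ)) C)
    (hC'_pos : ∀ μ > (0 : ℝ), 0 < deriv C μ)
    (K : Finset ℕ) (hK : K.Nonempty) (hK2 : ∀ k ∈ K, 2 ≤ k)
    (d v : ℕ → ℝ) (hd : ∀ k ∈ K, 0 < d k) (hv : ∀ k ∈ K, 0 < v k)
    (xs : ℕ → ℝ) (hxs : ∀ k ∈ K, 0 < xs k)
    (hDE : ∀ k ∈ K, v k * (((k : ℝ) - 1) / (k : ℝ) ^ 2) * (deriv f (xs k) / f (xs k))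
      = deriv C (∑ ℓ ∈ K, d ℓ * xs ℓ))
    (xu : ℝ) (hxu : 0 < xu)
    (hUE : (∑ ℓ ∈ K, d ℓ * v ℓ * (((ℓ : ℝ) - 1) / (ℓ : ℝ) ^ 2)) * (deriv f xu / f xu)
      = deriv C ((∑ ℓ ∈ K, d ℓ) * xu) * (∑ ℓ ∈ K, d ℓ))
    (hconc : ConcaveOn ℝ (Set.Ioi (0 : ℝ)) (fun x => f x / deriv f x)) :
    (∑ k ∈ K, d k) * xu ≤ ∑ k ∈ K, d k * xs k := by
  classical
  set D : ℝ := ∑ k ∈ K, d k with hD_def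
  set M : ℝ := ∑ k ∈ K, d k * xs k with hM_def
  set S : ℝ := ∑ ℓ ∈ K, d ℓ * v ℓ * (((ℓ : ℝ) - 1) / (ℓ : ℝ) ^ 2) with hS_def
  set h : ℝ → ℝ := fun x => f x / deriv f x with hh_def
  -- basic positivity of the weights (k-1)/k^2
  have halpha : ∀ k ∈ K, 0 < ((k : ℝ) - 1) / (k : ℝ) ^ 2 := by
    intro k hk
    have h2 : (2 : ℝ) ≤ (k : ℝ) := by exact_mod_cast hK2 k hk
    have hk0 : (0 : ℝ) < (k : ℝ) := by linarith
    have : (0 : ℝ) < (k : ℝ) - 1 := by linarith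
    positivity
  have hD_pos : 0 < D := Finset.sum_pos hd hK
  have hM_pos : 0 < M :=
    Finset.sum_pos (fun k hk => mul_pos (hd k hk) (hxs k hk)) hK
  have hS_pos : 0 < S :=
    Finset.sum_pos (fun k hk => mul_pos (mul_pos (hd k hk) (hv k hk)) (halpha k hk)) hK
  have hDxu_pos : 0 < D * xu := mul_pos hD_pos hxu
  have hc1 : 0 < deriv C M := hC'_pos M hM_pos
  have hc2 : 0 < deriv C (D * xu) := hC'_pos _ hDxu_pos
  -- f is monotone on (0, ∞)
  have hf_mono : StrictMonoOn f (Set.Ioi (0 : ℝ)) := by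
    apply strictMonoOn_of_deriv_pos (convex_Ioi 0)
    · exact fun x hx => (hf_diff x hx).continuousAt.continuousWithinAt
    · intro x hx
      rw [interior_Ioi] at hx
      exact hf'_pos x hx
  -- f is positive at each DE solution point
  have hfxs_pos : ∀ k ∈ K, 0 < f (xs k) := by
    intro k hk
    have heq := hDE k hk
    have hva : 0 < v k * (((k : ℝ) - 1) / (k : ℝ) ^ 2) := mul_pos (hv k hk) (halpha k hk)
    have hr : 0 < deriv f (xs k) / f (xs k) := by
      by_contra hle
      push_neg at hle
      nlinarith
    rcases div_pos_iff.mp hr with ⟨_, hf_pos⟩ | ⟨hneg, _⟩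
    · exact hf_pos
    · exact absurd (hf'_pos (xs k) (hxs k hk)) (not_lt.mpr hneg.le)
  -- f is positive at the UE solution point
  have hfxu_pos : 0 < f xu := by
    have hr : 0 < deriv f xu / f xu := by
      by_contra hle
      push_neg at hle
      nlinarith [mul_pos hc2 hD_pos]
    rcases div_pos_iff.mp hr with ⟨_, hf_pos⟩ | ⟨hneg, _⟩
    · exact hf_pos
    · exact absurd (hf'_pos xu hxu) (not_lt.mpr hneg.le)
  -- DE solved for h
  have hDE' : ∀ k ∈ K, h (xs k) = v k * (((k : ℝ) - 1) / (k : ℝ) ^ 2) / deriv C M := by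
    intro k hk
    have heq := hDE k hk
    have hfp := hfxs_pos k hk
    have hfp' := hf'_pos (xs k) (hxs k hk)
    set A : ℝ := ((k : ℝ) - 1) / (k : ℝ) ^ 2 with hA_def
    rw [hh_def]
    show f (xs k) / deriv f (xs k) = v k * A / deriv C M
    rw [div_eq_div_iff hfp'.ne' hc1.ne']
    rw [← mul_div_assoc] at heq
    rw [div_eq_iff hfp.ne'] at heq
    linear_combination -heq
  -- UE solved for h
  have hUE' : h xu = S / (D * deriv C (D * xu)) := by
    have hfp' := hf'_pos xu hxu
    rw [hh_def]
    show f xu / deriv f xu = S / (D * deriv C (D * xu))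
    rw [div_eq_div_iff hfp'.ne' (by positivity : (D * deriv C (D * xu)) ≠ 0)]
    have heq := hUE
    rw [← mul_div_assoc, div_eq_iff hfxu_pos.ne'] at heq
    linear_combination -heq
  -- h is strictly increasing between points where f is positive
  have h_incr : ∀ a b : ℝ, 0 < a → a < b → 0 < f a → h a < h b := by
    intro a b ha hab hfa
    have hsub : Set.Icc a b ⊆ Set.Ioi (0 : ℝ) := fun z hz => lt_of_lt_of_le ha hz.1
    have hcont : ContinuousOn h (Set.Icc a b) := by
      intro z hz
      have hz0 : 0 < z := hsub hz
      exact (((hf_diff z hz0).div (hf'_diff z hz0)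
        (hf'_pos z hz0).ne').continuousAt).continuousWithinAt
    have hderiv : ∀ z ∈ interior (Set.Icc a b), 0 < deriv h z := by
      intro z hz
      rw [interior_Icc] at hz
      have hz0 : 0 < z := lt_trans ha hz.1
      have hfz : 0 < f z := lt_of_lt_of_le hfa (hf_mono.monotoneOn (Set.mem_Ioi.mpr ha)
        (Set.mem_Ioi.mpr hz0) hz.1.le)
      have hfz' := hf'_pos z hz0
      have hfz'' := hf''_nonpos z hz0
      have hd : deriv h z = (deriv f z * deriv f z - f z * deriv (deriv f) z)
          / (deriv f z) ^ 2 := by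
        rw [hh_def]
        exact deriv_div (hf_diff z hz0) (hf'_diff z hz0) hfz'.ne'
      rw [hd]
      apply div_pos _ (by positivity)
      nlinarith
    exact strictMonoOn_of_deriv_pos (convex_Icc a b) hcont hderiv
      (Set.left_mem_Icc.mpr hab.le) (Set.right_mem_Icc.mpr hab.le) hab
  by_contra hcon
  push_neg at hcon
  -- hcon : M < D * xu
  have hCmono : deriv C M ≤ deriv C (D * xu) := by
    have hdiffC : ∀ x ∈ Set.Ioi (0 : ℝ), DifferentiableAt ℝ C x := by
      intro x hx
      have : ContDiffAt ℝ 2 C x :=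
        hC_smooth.contDiffAt (mem_nhds_iff.mpr ⟨Set.Ioi 0, Set.Ioi_subset_Ici_self,
          isOpen_Ioi, hx⟩)
      exact this.differentiableAt (by norm_num)
    exact (hC_conv.subset Set.Ioi_subset_Ici_self (convex_Ioi 0)).monotoneOn_deriv hdiffC
      (Set.mem_Ioi.mpr hM_pos) (Set.mem_Ioi.mpr hDxu_pos) hcon.le
  set y : ℝ := M / D with hy_def
  have hy_pos : 0 < y := div_pos hM_pos hD_pos
  have hy_lt : y < xu := by
    rw [hy_def, div_lt_iff₀ hD_pos]
    linarith [hcon]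
  -- some solution point lies below the average y
  have hexists : ∃ k ∈ K, xs k ≤ y := by
    by_contra hall
    push_neg at hall
    have : M > D * y := by
      rw [hD_def, hM_def, Finset.sum_mul]
      exact Finset.sum_lt_sum_of_nonempty hK
        (fun k hk => by
          have := hall k hk
          exact mul_lt_mul_of_pos_left (hall k hk) (hd k hk))
    rw [hy_def] at this
    rw [mul_div_cancel₀ M hD_pos.ne'] at this
    exact lt_irrefl M this
  obtain ⟨k₀, hk₀, hk₀y⟩ := hexists
  have hfy_pos : 0 < f y := by
    rcases eq_or_lt_of_le hk₀y with heq | hlt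
    · rw [← heq]; exact hfxs_pos k₀ hk₀
    · exact lt_trans (hfxs_pos k₀ hk₀)
        (hf_mono (Set.mem_Ioi.mpr (hxs k₀ hk₀)) (Set.mem_Ioi.mpr hy_pos) hlt)
  -- Jensen's inequality
  have hjensen : (∑ k ∈ K, (d k / D) • h (xs k)) ≤ h (∑ k ∈ K, (d k / D) • xs k) := by
    apply hconc.le_map_sum
    · exact fun k hk => div_nonneg (hd k hk).le hD_pos.le
    · rw [← Finset.sum_div, ← hD_def, div_self hD_pos.ne']
    · exact fun k hk => Set.mem_Ioi.mpr (hxs k hk)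
  have hsum_y : (∑ k ∈ K, (d k / D) • xs k) = y := by
    rw [hy_def, hM_def, Finset.sum_div]
    exact Finset.sum_congr rfl fun k _ => by rw [smul_eq_mul]; ring
  have hsum_h : (∑ k ∈ K, (d k / D) • h (xs k)) = S / (D * deriv C M) := by
    rw [hS_def, Finset.sum_div]
    refine Finset.sum_congr rfl fun k hk => ?_
    rw [smul_eq_mul, hDE' k hk]
    field_simp
  -- assemble the contradiction
  have hchain1 : h xu ≤ S / (D * deriv C M) := by
    rw [hUE']
    apply div_le_div_of_nonneg_left hS_pos.le (by positivity)
    exact mul_le_mul_of_nonneg_left hCmono hD_pos.le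
  have hchain2 : h xu ≤ h y := by
    calc h xu ≤ S / (D * deriv C M) := hchain1
    _ = ∑ k ∈ K, (d k / D) • h (xs k) := hsum_h.symm
    _ ≤ h (∑ k ∈ K, (d k / D) • xs k) := hjensen
    _ = h y := by rw [hsum_y]
  exact absurd hchain2 (not_le.mpr (h_incr y xu hy_pos hy_lt hfy_pos))
end

section
/- (Theorem 1, part 3: neutrality for linear h.) Let f be a contest production function, C a cost function, and consider a semi-symmetric conflict network with size set K, multiplicities d_k > 0 and prizes v_k > 0. Let (x_k*)_{k∈K} be a positive solution of the DE first-order system and x^u > 0 a solution of the UE first-order equation. If h(x) = f(x)/f'(x) is linear on (0,∞), i.e., h(x) = x/r for some r > 0, then the total efforts under DE and UE coincide: Σ_{k∈K} d_k x_k* = (Σ_{k∈K} d_k) x^u. -/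
/-!
When `f / f' = x / r`, each first-order condition reads `(prize weight) · r / x = C'(total)`.
Multiplying the DE condition for battle size `k` by `d_k x_k` and summing, and multiplying the
UE condition by `x`, shows that both total efforts `T` solve `T · C'(T) = r · Σ d_k v_k (k-1)/k²`.
Since `C'` is positive and monotone, `T ↦ T · C'(T)` is strictly increasing, so the totals agree.
-/

open Finset Set

theorem strictMonoOn_mul_deriv_of_convexOn {C : ℝ → ℝ} (hC_conv : ConvexOn ℝ (Ioi 0) C)
    (hC'_pos : ∀ μ > (0 : ℝ), 0 < deriv C μ) :
    StrictMonoOn (fun t ↦ t * deriv C t) (Ioi 0) := by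
  -- `deriv` is `0` wherever `C` is not differentiable, so `C' > 0` gives differentiability.
  have hmono : MonotoneOn (deriv C) (Ioi 0) :=
    hC_conv.monotoneOn_deriv fun x hx ↦ differentiableAt_of_deriv_ne_zero (hC'_pos x hx).ne'
  intro a ha b hb hab
  calc a * deriv C a < b * deriv C a := mul_lt_mul_of_pos_right hab (hC'_pos a ha)
    _ ≤ b * deriv C b := mul_le_mul_of_nonneg_left (hmono ha hb hab.le) (le_of_lt hb)

theorem sum_mul_mul_eq_of_forall_mul_div_eq {ι : Type*} (K : Finset ι) (a d x : ι → ℝ)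
    {r c : ℝ} (hx : ∀ k ∈ K, x k ≠ 0) (h : ∀ k ∈ K, a k * (r / x k) = c) :
    (∑ k ∈ K, d k * x k) * c = r * ∑ k ∈ K, d k * a k := by
  rw [sum_mul, mul_sum]
  refine sum_congr rfl fun k hk ↦ ?_
  rw [← h k hk]
  field_simp [hx k hk]

theorem de_eq_ue_of_linear_general
    (f : ℝ → ℝ)
    (C : ℝ → ℝ)
    (hC_conv : ConvexOn ℝ (Set.Ici (0 : ℝ)) C)
    (hC'_pos : ∀ μ > (0 : ℝ), 0 < deriv C μ)
    (K : Finset ℕ) (hK : K.Nonempty)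
    (d v : ℕ → ℝ) (hd : ∀ k ∈ K, 0 < d k)
    (xs : ℕ → ℝ) (hxs : ∀ k ∈ K, 0 < xs k)
    (hDE : ∀ k ∈ K, v k * (((k : ℝ) - 1) / (k : ℝ) ^ 2) * (deriv f (xs k) / f (xs k))
      = deriv C (∑ ℓ ∈ K, d ℓ * xs ℓ))
    (xu : ℝ) (hxu : 0 < xu)
    (hUE : (∑ ℓ ∈ K, d ℓ * v ℓ * (((ℓ : ℝ) - 1) / (ℓ : ℝ) ^ 2)) * (deriv f xu / f xu)
      = deriv C ((∑ ℓ ∈ K, d ℓ) * xu) * (∑ ℓ ∈ K, d ℓ))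
    (hlin : ∃ r > (0 : ℝ), ∀ x > (0 : ℝ), f x / deriv f x = x / r) :
    ∑ k ∈ K, d k * xs k = (∑ k ∈ K, d k) * xu := by
  obtain ⟨r, -, hlin⟩ := hlin
  have hratio : ∀ x > (0 : ℝ), deriv f x / f x = r / x := fun x hx ↦ by
    rw [← inv_div, hlin x hx, inv_div]
  set S := ∑ ℓ ∈ K, d ℓ * v ℓ * (((ℓ : ℝ) - 1) / (ℓ : ℝ) ^ 2)
  have hDE_total : (∑ k ∈ K, d k * xs k) * deriv C (∑ ℓ ∈ K, d ℓ * xs ℓ) = r * S := by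
    simpa only [S, mul_assoc] using sum_mul_mul_eq_of_forall_mul_div_eq K _ d xs
      (fun k hk ↦ (hxs k hk).ne') fun k hk ↦ hratio (xs k) (hxs k hk) ▸ hDE k hk
  have hUE_total : ((∑ k ∈ K, d k) * xu) * deriv C ((∑ k ∈ K, d k) * xu) = r * S := by
    rw [hratio xu hxu] at hUE
    calc ((∑ k ∈ K, d k) * xu) * deriv C ((∑ k ∈ K, d k) * xu)
        = xu * (deriv C ((∑ k ∈ K, d k) * xu) * ∑ k ∈ K, d k) := by ring
      _ = r * S := by rw [← hUE]; field_simp [hxu.ne']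
  exact (strictMonoOn_mul_deriv_of_convexOn (hC_conv.subset Ioi_subset_Ici_self (convex_Ioi 0))
    hC'_pos).injOn (sum_pos (fun k hk ↦ mul_pos (hd k hk) (hxs k hk)) hK)
    (mul_pos (sum_pos hd hK) hxu) (hDE_total.trans hUE_total.symm)

/-- Theorem 1, part 3 (neutrality): if h = f/f' is linear on (0,∞), i.e.
h x = x / r for some r > 0, then total efforts under DE and UE coincide. -/
theorem de_eq_ue_of_linear
    (f : ℝ → ℝ)
    (hf0 : f 0 = 0)
    (hf_diff : ∀ x > (0 : ℝ), DifferentiableAt ℝ f x)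
    (hf'_diff : ∀ x > (0 : ℝ), DifferentiableAt ℝ (deriv f) x)
    (hf'_pos : ∀ x > (0 : ℝ), 0 < deriv f x)
    (hf''_nonpos : ∀ x > (0 : ℝ), deriv (deriv f) x ≤ 0)
    (C : ℝ → ℝ)
    (hC_smooth : ContDiffOn ℝ 2 C (Set.Ici (0 : ℝ)))
    (hC_mono : StrictMonoOn C (Set.Ici (0 : ℝ)))
    (hC_conv : ConvexOn ℝ (Set.Ici (0 : ℝ)) C)
    (hC'_pos : ∀ μ > (0 : ℝ), 0 < deriv C μ)
    (K : Finset ℕ) (hK : K.Nonempty) (hK2 : ∀ k ∈ K, 2 ≤ k)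
    (d v : ℕ → ℝ) (hd : ∀ k ∈ K, 0 < d k) (hv : ∀ k ∈ K, 0 < v k)
    (xs : ℕ → ℝ) (hxs : ∀ k ∈ K, 0 < xs k)
    (hDE : ∀ k ∈ K, v k * (((k : ℝ) - 1) / (k : ℝ) ^ 2) * (deriv f (xs k) / f (xs k))
      = deriv C (∑ ℓ ∈ K, d ℓ * xs ℓ))
    (xu : ℝ) (hxu : 0 < xu)
    (hUE : (∑ ℓ ∈ K, d ℓ * v ℓ * (((ℓ : ℝ) - 1) / (ℓ : ℝ) ^ 2)) * (deriv f xu / f xu)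
      = deriv C ((∑ ℓ ∈ K, d ℓ) * xu) * (∑ ℓ ∈ K, d ℓ))
    (hlin : ∃ r > (0 : ℝ), ∀ x > (0 : ℝ), f x / deriv f x = x / r) :
    ∑ k ∈ K, d k * xs k = (∑ k ∈ K, d k) * xu :=
  de_eq_ue_of_linear_general f C hC_conv hC'_pos K hK d v hd xs hxs hDE xu hxu hUE hlin
end

section
/- (Corollary 1, convex case.) Let f be a contest production function, C a cost function, and consider a semi-symmetric conflict network with size set K, multiplicities d_k > 0 and prizes v_k > 0. Let (x_k*)_{k∈K} be a positive solution of the DE first-order system and x^u > 0 a solution of the UE first-order equation, and define the equilibrium payoff function Π(X) = Σ_{k∈K} d_k · v_k / k − C(X). If h(x) = f(x)/f'(x) is convex on (0,∞), then the expected payoff in DE is not less than that in UE: Π(Σ_{k∈K} d_k x_k*) ≥ Π((Σ_{k∈K} d_k) x^u). -/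
/-- Corollary 1, convex case: if h = f/f' is convex on (0,∞), the expected
payoff under DE is not less than that under UE. -/
theorem payoff_de_ge_ue_of_convex
    (f : ℝ → ℝ)
    (hf0 : f 0 = 0)
    (hf_diff : ∀ x > (0 : ℝ), DifferentiableAt ℝ f x)
    (hf'_diff : ∀ x > (0 : ℝ), DifferentiableAt ℝ (deriv f) x)
    (hf'_pos : ∀ x > (0 : ℝ), 0 < deriv f x)
    (hf''_nonpos : ∀ x > (0 : ℝ), deriv (deriv f) x ≤ 0)
    (C : ℝ → ℝ)
    (hC_smooth : ContDiffOn ℝ 2 C (Set.Ici (0 : ℝ)))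
    (hC_mono : StrictMonoOn C (Set.Ici (0 : ℝ)))
    (hC_conv : ConvexOn ℝ (Set.Ici (0 : ℝ)) C)
    (hC'_pos : ∀ μ > (0 : ℝ), 0 < deriv C μ)
    (K : Finset ℕ) (hK : K.Nonempty) (hK2 : ∀ k ∈ K, 2 ≤ k)
    (d v : ℕ → ℝ) (hd : ∀ k ∈ K, 0 < d k) (hv : ∀ k ∈ K, 0 < v k)
    (xs : ℕ → ℝ) (hxs : ∀ k ∈ K, 0 < xs k)
    (hDE : ∀ k ∈ K, v k * (((k : ℝ) - 1) / (k : ℝ) ^ 2) * (deriv f (xs k) / f (xs k))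
      = deriv C (∑ ℓ ∈ K, d ℓ * xs ℓ))
    (xu : ℝ) (hxu : 0 < xu)
    (hUE : (∑ ℓ ∈ K, d ℓ * v ℓ * (((ℓ : ℝ) - 1) / (ℓ : ℝ) ^ 2)) * (deriv f xu / f xu)
      = deriv C ((∑ ℓ ∈ K, d ℓ) * xu) * (∑ ℓ ∈ K, d ℓ))
    (hconv : ConvexOn ℝ (Set.Ioi (0 : ℝ)) (fun x => f x / deriv f x)) :
    (∑ k ∈ K, d k * v k / (k : ℝ)) - C ((∑ k ∈ K, d k) * xu)
      ≤ (∑ k ∈ K, d k * v k / (k : ℝ)) - C (∑ k ∈ K, d k * xs k) := by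
  classical
  set D : ℝ := ∑ ℓ ∈ K, d ℓ with hD_def
  set X : ℝ := ∑ ℓ ∈ K, d ℓ * xs ℓ with hX_def
  set S : ℝ := ∑ ℓ ∈ K, d ℓ * v ℓ * (((ℓ : ℝ) - 1) / (ℓ : ℝ) ^ 2) with hS_def
  set h : ℝ → ℝ := fun x => f x / deriv f x with hh_def
  -- positivity of prize coefficients
  have hA : ∀ k ∈ K, 0 < v k * (((k : ℝ) - 1) / (k : ℝ) ^ 2) := by
    intro k hk
    have hk2 : (2 : ℝ) ≤ (k : ℝ) := by exact_mod_cast hK2 k hk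
    have hk0 : (0 : ℝ) < (k : ℝ) := by linarith
    have : 0 < ((k : ℝ) - 1) / (k : ℝ) ^ 2 :=
      div_pos (by linarith) (by positivity)
    exact mul_pos (hv k hk) this
  have hD_pos : 0 < D :=
    Finset.sum_pos (fun k hk => hd k hk) hK
  have hX_pos : 0 < X :=
    Finset.sum_pos (fun k hk => mul_pos (hd k hk) (hxs k hk)) hK
  have hS_pos : 0 < S := by
    refine Finset.sum_pos (fun k hk => ?_) hK
    have := hA k hk
    have := hd k hk
    nlinarith [hA k hk, hd k hk]
  have hcstar : 0 < deriv C X := hC'_pos X hX_pos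
  have hDxu_pos : 0 < D * xu := mul_pos hD_pos hxu
  have hcU : 0 < deriv C (D * xu) := hC'_pos _ hDxu_pos
  -- f positive at DE points
  have hfxs_pos : ∀ k ∈ K, 0 < f (xs k) := by
    intro k hk
    have hDEk := hDE k hk
    have hfd := hf'_pos (xs k) (hxs k hk)
    by_contra hle
    push_neg at hle
    have hratio : deriv f (xs k) / f (xs k) ≤ 0 := by
      rcases lt_or_eq_of_le hle with hlt | heq
      · exact le_of_lt (div_neg_of_pos_of_neg hfd hlt)
      · rw [heq, div_zero]
    have : v k * (((k : ℝ) - 1) / (k : ℝ) ^ 2) * (deriv f (xs k) / f (xs k)) ≤ 0 :=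
      mul_nonpos_of_nonneg_of_nonpos (le_of_lt (hA k hk)) hratio
    rw [hDEk] at this
    linarith
  -- f positive at xu
  have hfxu_pos : 0 < f xu := by
    have hfd := hf'_pos xu hxu
    by_contra hle
    push_neg at hle
    have hratio : deriv f xu / f xu ≤ 0 := by
      rcases lt_or_eq_of_le hle with hlt | heq
      · exact le_of_lt (div_neg_of_pos_of_neg hfd hlt)
      · rw [heq, div_zero]
    have : S * (deriv f xu / f xu) ≤ 0 :=
      mul_nonpos_of_nonneg_of_nonpos (le_of_lt hS_pos) hratio
    rw [hUE] at this
    nlinarith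
  -- h at DE points
  have hh_xs : ∀ k ∈ K, h (xs k) = v k * (((k : ℝ) - 1) / (k : ℝ) ^ 2) / deriv C X := by
    intro k hk
    have hDEk := hDE k hk
    have hf'k := hf'_pos (xs k) (hxs k hk)
    have hfk := hfxs_pos k hk
    have h1 : v k * (((k : ℝ) - 1) / (k : ℝ) ^ 2) * deriv f (xs k)
        = deriv C X * f (xs k) := by
      have h2 := hDEk
      rw [← mul_div_assoc, div_eq_iff (ne_of_gt hfk)] at h2
      linarith
    rw [hh_def]
    simp only
    rw [div_eq_div_iff (ne_of_gt hf'k) (ne_of_gt hcstar)]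
    linear_combination -h1
  -- h at xu
  have hh_xu : h xu = S / (D * deriv C (D * xu)) := by
    have hf'u := hf'_pos xu hxu
    have h1 : S * deriv f xu = deriv C (D * xu) * D * f xu := by
      have h2 := hUE
      rw [← mul_div_assoc, div_eq_iff (ne_of_gt hfxu_pos)] at h2
      linarith
    rw [hh_def]
    simp only
    rw [div_eq_div_iff (ne_of_gt hf'u) (ne_of_gt (mul_pos hD_pos hcU))]
    linear_combination -h1
  -- f strictly increasing on Ioi 0
  have hf_mono : StrictMonoOn f (Set.Ioi (0 : ℝ)) := by
    apply strictMonoOn_of_deriv_pos (convex_Ioi 0)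
    · exact fun x hx => (hf_diff x hx).continuousAt.continuousWithinAt
    · intro x hx
      rw [interior_Ioi] at hx
      exact hf'_pos x hx
  -- h strictly increasing on Ici xu
  have hh_mono : StrictMonoOn h (Set.Ici xu) := by
    apply strictMonoOn_of_deriv_pos (convex_Ici xu)
    · intro x hx
      have hx0 : 0 < x := lt_of_lt_of_le hxu hx
      exact (((hf_diff x hx0).div (hf'_diff x hx0)
        (ne_of_gt (hf'_pos x hx0)))).continuousAt.continuousWithinAt
    · intro x hx
      rw [interior_Ici] at hx
      have hx0 : 0 < x := lt_trans hxu hx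
      have hfx_pos : 0 < f x :=
        lt_trans hfxu_pos (hf_mono (Set.mem_Ioi.mpr hxu) (Set.mem_Ioi.mpr hx0) hx)
      have hderiv : deriv h x =
          (deriv f x * deriv f x - f x * deriv (deriv f) x) / (deriv f x) ^ 2 := by
        rw [hh_def]
        exact deriv_div (hf_diff x hx0) (hf'_diff x hx0) (ne_of_gt (hf'_pos x hx0))
      rw [hderiv]
      have h1 := hf'_pos x hx0
      have h2 := hf''_nonpos x hx0
      have hnum : 0 < deriv f x * deriv f x - f x * deriv (deriv f) x := by
        nlinarith
      positivity
  -- Jensen: h (X / D) ≤ ∑ (d k / D) * h (xs k)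
  have hJensen : h (X / D) ≤ ∑ k ∈ K, (d k / D) * h (xs k) := by
    have hsum_w : ∑ k ∈ K, d k / D = 1 := by
      rw [← Finset.sum_div, ← hD_def, div_self (ne_of_gt hD_pos)]
    have := hconv.map_sum_le (t := K) (w := fun k => d k / D) (p := fun k => xs k)
      (fun k hk => le_of_lt (div_pos (hd k hk) hD_pos)) hsum_w
      (fun k hk => Set.mem_Ioi.mpr (hxs k hk))
    have hpt : ∑ k ∈ K, (d k / D) • xs k = X / D := by
      rw [hX_def, Finset.sum_div]
      exact Finset.sum_congr rfl fun k hk => by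
        rw [smul_eq_mul]; ring
    rw [hpt] at this
    simpa [smul_eq_mul] using this
  -- the main comparison: X ≤ D * xu
  have hmain : X ≤ D * xu := by
    by_contra hgt
    push_neg at hgt
    have hxuX : xu < X / D := by
      rw [lt_div_iff₀ hD_pos]; linarith [hgt]
    -- deriv C monotone
    have hC'_mono : MonotoneOn (deriv C) (Set.Ioi (0 : ℝ)) := by
      have hsub : (Set.Ioi (0 : ℝ)) ⊆ Set.Ici 0 := Set.Ioi_subset_Ici le_rfl
      refine (hC_conv.subset hsub (convex_Ioi 0)).monotoneOn_deriv ?_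
      intro x hx
      have : ContDiffAt ℝ 2 C x :=
        hC_smooth.contDiffAt (Filter.mem_of_superset (Ici_mem_nhds hx) (by simp))
      exact this.differentiableAt (by norm_num)
    have hC'le : deriv C (D * xu) ≤ deriv C X :=
      hC'_mono (Set.mem_Ioi.mpr hDxu_pos) (Set.mem_Ioi.mpr hX_pos) (le_of_lt hgt)
    -- compute the weighted sum of h(xs k)
    have hsum_h : ∑ k ∈ K, (d k / D) * h (xs k) = S / (D * deriv C X) := by
      rw [hS_def, Finset.sum_div]
      refine Finset.sum_congr rfl fun k hk => ?_
      rw [hh_xs k hk, div_mul_div_comm]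
      ring
    have hhXD : h (X / D) ≤ S / (D * deriv C X) := by
      rw [← hsum_h]; exact hJensen
    have hlt1 : h xu < h (X / D) :=
      hh_mono (Set.mem_Ici.mpr le_rfl) (Set.mem_Ici.mpr (le_of_lt hxuX)) hxuX
    have hle2 : S / (D * deriv C X) ≤ S / (D * deriv C (D * xu)) := by
      apply div_le_div_of_nonneg_left (le_of_lt hS_pos) (mul_pos hD_pos hcU)
      exact mul_le_mul_of_nonneg_left hC'le (le_of_lt hD_pos)
    rw [hh_xu] at hlt1
    linarith
  have : C X ≤ C ((∑ ℓ ∈ K, d ℓ) * xu) := by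
    rcases eq_or_lt_of_le hmain with heq | hlt
    · rw [← hD_def, ← heq]
    · exact le_of_lt (hC_mono (Set.mem_Ici.mpr (le_of_lt hX_pos))
        (Set.mem_Ici.mpr (le_of_lt hDxu_pos)) hlt)
  linarith [this]
end

section
/- (Corollary 1, concave case.) Let f be a contest production function, C a cost function, and consider a semi-symmetric conflict network with size set K, multiplicities d_k > 0 and prizes v_k > 0. Let (x_k*)_{k∈K} be a positive solution of the DE first-order system and x^u > 0 a solution of the UE first-order equation, and define the equilibrium payoff function Π(X) = Σ_{k∈K} d_k · v_k / k − C(X). If h(x) = f(x)/f'(x) is concave on (0,∞), then the expected payoff in DE does not exceed that in UE: Π(Σ_{k∈K} d_k x_k*) ≤ Π((Σ_{k∈K} d_k) x^u). -/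
/-!
Write `h = f / f'`, `X = ∑ d_k x_k*`, `D = ∑ d_k` and `S = ∑ d_k v_k (k-1)/k²`. The DE system says
`h(x_k*) C'(X) = v_k (k-1)/k²`, so concavity of `h` (Jensen with weights `d_k`) gives
`S ≤ D C'(X) h(X/D)`; in particular `h(X/D) > 0`, so `f(X/D) > 0`. The UE equation says
`S = D C'(D x^u) h(x^u)`. Since `f'' ≤ 0`, `h' = 1 - f f''/f'² > 0` wherever `f > 0`, so `h` is
strictly increasing on `[X/D, ∞)`; as `C'` is monotone, `X < D x^u` would give
`D C'(X) h(X/D) < D C'(D x^u) h(x^u) = S`, a contradiction. Hence `D x^u ≤ X`, and monotonicity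
of `C` concludes.
-/

open Set Finset

theorem ConcaveOn.sum_mul_le_mul_map_div {ι : Type*} {s : Set ℝ} {g : ℝ → ℝ} {t : Finset ι}
    {w p : ι → ℝ} (hg : ConcaveOn ℝ s g) (h₀ : ∀ i ∈ t, 0 ≤ w i) (h₁ : 0 < ∑ i ∈ t, w i)
    (hp : ∀ i ∈ t, p i ∈ s) :
    ∑ i ∈ t, w i * g (p i) ≤ (∑ i ∈ t, w i) * g ((∑ i ∈ t, w i * p i) / ∑ i ∈ t, w i) := by
  have jensen := hg.le_map_centerMass h₀ h₁ hp
  simp only [Finset.centerMass, smul_eq_mul, Function.comp_apply] at jensen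
  rwa [inv_mul_le_iff₀ h₁, ← div_eq_inv_mul] at jensen

theorem div_mul_eq_of_mul_div_eq {a b c m : ℝ} (hm : m ≠ 0) (h : c * (b / a) = m) :
    a / b * m = c := by
  have ha : a ≠ 0 := by rintro rfl; simp_all
  have hb : b ≠ 0 := by rintro rfl; simp_all
  rw [← h]
  field_simp

theorem strictMonoOn_Ioi_of_deriv_pos {f : ℝ → ℝ}
    (hf : ∀ x > (0 : ℝ), DifferentiableAt ℝ f x) (hf'_pos : ∀ x > (0 : ℝ), 0 < deriv f x) :
    StrictMonoOn f (Ioi 0) := by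
  refine strictMonoOn_of_deriv_pos (convex_Ioi 0) (fun x hx => ?_) (fun x hx => ?_)
  · exact (hf x hx).continuousAt.continuousWithinAt
  · rw [interior_Ioi] at hx
    exact hf'_pos x hx

theorem strictMonoOn_div_deriv_Ici {f : ℝ → ℝ} {a : ℝ} (ha : 0 < a) (hfa : 0 < f a)
    (hf : ∀ x > (0 : ℝ), DifferentiableAt ℝ f x)
    (hf' : ∀ x > (0 : ℝ), DifferentiableAt ℝ (deriv f) x)
    (hf'_pos : ∀ x > (0 : ℝ), 0 < deriv f x)
    (hf''_nonpos : ∀ x > (0 : ℝ), deriv (deriv f) x ≤ 0) :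
    StrictMonoOn (fun x => f x / deriv f x) (Ici a) := by
  refine strictMonoOn_of_deriv_pos (convex_Ici a) (fun x hx => ?_) (fun x hx => ?_)
  · have hx0 : 0 < x := ha.trans_le hx
    exact ((hf x hx0).div (hf' x hx0) (hf'_pos x hx0).ne').continuousAt.continuousWithinAt
  · rw [interior_Ici] at hx
    have hx0 : 0 < x := ha.trans hx
    have hfx : 0 < f x :=
      hfa.trans ((strictMonoOn_Ioi_of_deriv_pos hf hf'_pos) ha hx0 hx)
    have hf'x := hf'_pos x hx0
    rw [deriv_fun_div (hf x hx0) (hf' x hx0) hf'x.ne']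
    apply div_pos _ (pow_pos hf'x 2)
    nlinarith [hf''_nonpos x hx0]

theorem sum_mul_le_of_concaveOn_div_deriv {f : ℝ → ℝ} {ι : Type*} {t : Finset ι}
    {d c x : ι → ℝ} {m : ℝ} (hm : 0 < m) (hd : ∀ i ∈ t, 0 ≤ d i) (hD : 0 < ∑ i ∈ t, d i)
    (hx : ∀ i ∈ t, 0 < x i) (hc : ∀ i ∈ t, c i * (deriv f (x i) / f (x i)) = m)
    (hconc : ConcaveOn ℝ (Ioi 0) (fun x => f x / deriv f x)) :
    ∑ i ∈ t, d i * c i ≤ (∑ i ∈ t, d i) *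
      (f ((∑ i ∈ t, d i * x i) / ∑ i ∈ t, d i) /
        deriv f ((∑ i ∈ t, d i * x i) / ∑ i ∈ t, d i)) * m := calc
  ∑ i ∈ t, d i * c i = (∑ i ∈ t, d i * (f (x i) / deriv f (x i))) * m := by
    rw [sum_mul]
    refine sum_congr rfl fun i hi => ?_
    rw [mul_assoc, div_mul_eq_of_mul_div_eq hm.ne' (hc i hi)]
  _ ≤ _ := by
    gcongr
    exact hconc.sum_mul_le_mul_map_div hd hD hx

theorem ue_total_effort_le_de {f C : ℝ → ℝ}
    (hf_diff : ∀ x > (0 : ℝ), DifferentiableAt ℝ f x)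
    (hf'_diff : ∀ x > (0 : ℝ), DifferentiableAt ℝ (deriv f) x)
    (hf'_pos : ∀ x > (0 : ℝ), 0 < deriv f x)
    (hf''_nonpos : ∀ x > (0 : ℝ), deriv (deriv f) x ≤ 0)
    (hC'_mono : MonotoneOn (deriv C) (Ioi 0)) (hC'_pos : ∀ μ > (0 : ℝ), 0 < deriv C μ)
    {K : Finset ℕ} (hK : K.Nonempty) (hK2 : ∀ k ∈ K, 2 ≤ k)
    {d v : ℕ → ℝ} (hd : ∀ k ∈ K, 0 < d k) (hv : ∀ k ∈ K, 0 < v k)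
    {xs : ℕ → ℝ} (hxs : ∀ k ∈ K, 0 < xs k)
    (hDE : ∀ k ∈ K, v k * (((k : ℝ) - 1) / (k : ℝ) ^ 2) * (deriv f (xs k) / f (xs k))
      = deriv C (∑ ℓ ∈ K, d ℓ * xs ℓ))
    {xu : ℝ} (hxu : 0 < xu)
    (hUE : (∑ ℓ ∈ K, d ℓ * v ℓ * (((ℓ : ℝ) - 1) / (ℓ : ℝ) ^ 2)) * (deriv f xu / f xu)
      = deriv C ((∑ ℓ ∈ K, d ℓ) * xu) * (∑ ℓ ∈ K, d ℓ))
    (hconc : ConcaveOn ℝ (Ioi 0) (fun x => f x / deriv f x)) :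
    (∑ k ∈ K, d k) * xu ≤ ∑ k ∈ K, d k * xs k := by
  set D := ∑ ℓ ∈ K, d ℓ
  set X := ∑ ℓ ∈ K, d ℓ * xs ℓ
  set S := ∑ ℓ ∈ K, d ℓ * v ℓ * (((ℓ : ℝ) - 1) / (ℓ : ℝ) ^ 2)
  set h : ℝ → ℝ := fun x => f x / deriv f x
  have hD : 0 < D := sum_pos hd hK
  have hX : 0 < X := sum_pos (fun k hk => mul_pos (hd k hk) (hxs k hk)) hK
  have hS : 0 < S := sum_pos (fun k hk => by
    have h2k : (2 : ℝ) ≤ k := by exact_mod_cast hK2 k hk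
    exact mul_pos (mul_pos (hd k hk) (hv k hk)) (div_pos (by linarith) (by positivity))) hK
  have hDE_bound : S ≤ D * h (X / D) * deriv C X := calc
    S = ∑ k ∈ K, d k * (v k * (((k : ℝ) - 1) / (k : ℝ) ^ 2)) :=
      sum_congr rfl fun k _ => mul_assoc _ _ _
    _ ≤ _ :=
      sum_mul_le_of_concaveOn_div_deriv (hC'_pos X hX) (fun k hk => (hd k hk).le) hD hxs hDE hconc
  have hC'u : 0 < deriv C (D * xu) := hC'_pos _ (mul_pos hD hxu)
  have hUE_eq : h xu * (deriv C (D * xu) * D) = S :=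
    div_mul_eq_of_mul_div_eq (mul_pos hC'u hD).ne' hUE
  have hy : 0 < X / D := div_pos hX hD
  have hhy : 0 < h (X / D) :=
    pos_of_mul_pos_right (pos_of_mul_pos_left (hS.trans_le hDE_bound) (hC'_pos X hX).le) hD.le
  have hfy : 0 < f (X / D) := (div_pos_iff_of_pos_right (hf'_pos _ hy)).mp hhy
  by_contra! hlt
  have hy_lt : X / D < xu := by rwa [div_lt_iff₀ hD, mul_comm]
  have hh_lt : h (X / D) < h xu := strictMonoOn_div_deriv_Ici hy hfy hf_diff hf'_diff hf'_pos
    hf''_nonpos self_mem_Ici hy_lt.le hy_lt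
  have hC'_le : deriv C X ≤ deriv C (D * xu) := hC'_mono hX (mul_pos hD hxu) hlt.le
  have : D * h (X / D) * deriv C X < S := calc
    D * h (X / D) * deriv C X ≤ D * h (X / D) * deriv C (D * xu) :=
      mul_le_mul_of_nonneg_left hC'_le (mul_pos hD hhy).le
    _ < D * h xu * deriv C (D * xu) := by gcongr
    _ = S := by rw [← hUE_eq]; ring
  linarith

theorem payoff_de_le_ue_of_concave_general
    (f : ℝ → ℝ)
    (hf_diff : ∀ x > (0 : ℝ), DifferentiableAt ℝ f x)
    (hf'_diff : ∀ x > (0 : ℝ), DifferentiableAt ℝ (deriv f) x)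
    (hf'_pos : ∀ x > (0 : ℝ), 0 < deriv f x)
    (hf''_nonpos : ∀ x > (0 : ℝ), deriv (deriv f) x ≤ 0)
    (C : ℝ → ℝ)
    (hC_smooth : ContDiffOn ℝ 2 C (Set.Ici (0 : ℝ)))
    (hC_mono : StrictMonoOn C (Set.Ici (0 : ℝ)))
    (hC_conv : ConvexOn ℝ (Set.Ici (0 : ℝ)) C)
    (hC'_pos : ∀ μ > (0 : ℝ), 0 < deriv C μ)
    (K : Finset ℕ) (hK : K.Nonempty) (hK2 : ∀ k ∈ K, 2 ≤ k)
    (d v : ℕ → ℝ) (hd : ∀ k ∈ K, 0 < d k) (hv : ∀ k ∈ K, 0 < v k)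
    (xs : ℕ → ℝ) (hxs : ∀ k ∈ K, 0 < xs k)
    (hDE : ∀ k ∈ K, v k * (((k : ℝ) - 1) / (k : ℝ) ^ 2) * (deriv f (xs k) / f (xs k))
      = deriv C (∑ ℓ ∈ K, d ℓ * xs ℓ))
    (xu : ℝ) (hxu : 0 < xu)
    (hUE : (∑ ℓ ∈ K, d ℓ * v ℓ * (((ℓ : ℝ) - 1) / (ℓ : ℝ) ^ 2)) * (deriv f xu / f xu)
      = deriv C ((∑ ℓ ∈ K, d ℓ) * xu) * (∑ ℓ ∈ K, d ℓ))
    (hconc : ConcaveOn ℝ (Set.Ioi (0 : ℝ)) (fun x => f x / deriv f x)) :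
    (∑ k ∈ K, d k * v k / (k : ℝ)) - C (∑ k ∈ K, d k * xs k)
      ≤ (∑ k ∈ K, d k * v k / (k : ℝ)) - C ((∑ k ∈ K, d k) * xu) := by
  have hC'_mono : MonotoneOn (deriv C) (Ioi 0) :=
    (hC_conv.subset Ioi_subset_Ici_self (convex_Ioi 0)).monotoneOn_deriv fun x hx =>
      (hC_smooth.differentiableOn (by norm_num)).differentiableAt (Ici_mem_nhds hx)
  have hD : 0 < ∑ k ∈ K, d k := sum_pos hd hK
  have hX : 0 < ∑ k ∈ K, d k * xs k := sum_pos (fun k hk => mul_pos (hd k hk) (hxs k hk)) hK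
  have h_effort := ue_total_effort_le_de hf_diff hf'_diff hf'_pos hf''_nonpos hC'_mono hC'_pos
    hK hK2 hd hv hxs hDE hxu hUE hconc
  exact sub_le_sub_left (hC_mono.monotoneOn (mul_pos hD hxu).le hX.le h_effort) _

/-- Corollary 1, concave case: if h = f/f' is concave on (0,∞), the expected
payoff under DE does not exceed that under UE. -/
theorem payoff_de_le_ue_of_concave
    (f : ℝ → ℝ)
    (hf0 : f 0 = 0)
    (hf_diff : ∀ x > (0 : ℝ), DifferentiableAt ℝ f x)
    (hf'_diff : ∀ x > (0 : ℝ), DifferentiableAt ℝ (deriv f) x)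
    (hf'_pos : ∀ x > (0 : ℝ), 0 < deriv f x)
    (hf''_nonpos : ∀ x > (0 : ℝ), deriv (deriv f) x ≤ 0)
    (C : ℝ → ℝ)
    (hC_smooth : ContDiffOn ℝ 2 C (Set.Ici (0 : ℝ)))
    (hC_mono : StrictMonoOn C (Set.Ici (0 : ℝ)))
    (hC_conv : ConvexOn ℝ (Set.Ici (0 : ℝ)) C)
    (hC'_pos : ∀ μ > (0 : ℝ), 0 < deriv C μ)
    (K : Finset ℕ) (hK : K.Nonempty) (hK2 : ∀ k ∈ K, 2 ≤ k)
    (d v : ℕ → ℝ) (hd : ∀ k ∈ K, 0 < d k) (hv : ∀ k ∈ K, 0 < v k)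
    (xs : ℕ → ℝ) (hxs : ∀ k ∈ K, 0 < xs k)
    (hDE : ∀ k ∈ K, v k * (((k : ℝ) - 1) / (k : ℝ) ^ 2) * (deriv f (xs k) / f (xs k))
      = deriv C (∑ ℓ ∈ K, d ℓ * xs ℓ))
    (xu : ℝ) (hxu : 0 < xu)
    (hUE : (∑ ℓ ∈ K, d ℓ * v ℓ * (((ℓ : ℝ) - 1) / (ℓ : ℝ) ^ 2)) * (deriv f xu / f xu)
      = deriv C ((∑ ℓ ∈ K, d ℓ) * xu) * (∑ ℓ ∈ K, d ℓ))
    (hconc : ConcaveOn ℝ (Set.Ioi (0 : ℝ)) (fun x => f x / deriv f x)) :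
    (∑ k ∈ K, d k * v k / (k : ℝ)) - C (∑ k ∈ K, d k * xs k)
      ≤ (∑ k ∈ K, d k * v k / (k : ℝ)) - C ((∑ k ∈ K, d k) * xu) :=
  payoff_de_le_ue_of_concave_general f hf_diff hf'_diff hf'_pos hf''_nonpos C hC_smooth hC_mono
    hC_conv hC'_pos K hK hK2 d v hd hv xs hxs hDE xu hxu hUE hconc
end

section
/- (Lemma A.2.) Let d_m > 0 and d_n > 0 be real numbers, and let h: (0,∞) → (0,∞) be strictly increasing with h(x) → 0 as x → 0+. Suppose that for all z_m > 0 and z_n > 0, (d_m + d_n) · h((d_m z_m + d_n z_n)/(d_m + d_n)) = d_m · h(z_m) + d_n · h(z_n). Then there exists r > 0 such that h(z) = z/r for all z > 0. -/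
/-!
With `l = dm / (dm + dn)` and `m = dn / (dm + dn)` the hypothesis reads
`h (l * a + m * b) = l * h a + m * h b`. Expanding `h (l * (l * a + m * t) + m * (m * c))` in the
two possible ways, the `t`-terms cancel and `l * (h (l * a) - l * h a) = m * (h (m * c) - m * h c)`
for all `a, c > 0`. The right side tends to `0` as `c → 0⁺`, so `h (l * a) = l * h a` and
`h (m * c) = m * h c`; substituting back, `h` is additive on `(0, ∞)`. An additive increasing
function there is linear: `h q = q * h 1` on positive rationals, and monotonicity squeezes the rest.
-/

open Filter Topology Set

section WeightedJensen

variable {h : ℝ → ℝ} {l m : ℝ}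

theorem tendsto_comp_const_mul_nhdsGT_zero (hlim : Tendsto h (𝓝[>] 0) (𝓝 0)) (hm : 0 < m) :
    Tendsto (fun c => h (m * c)) (𝓝[>] 0) (𝓝 0) := by
  refine hlim.comp (tendsto_nhdsWithin_of_tendsto_nhds_of_eventually_within _ ?_ ?_)
  · simpa using (continuous_const_mul m).tendsto' 0 0 (mul_zero m) |>.mono_left nhdsWithin_le_nhds
  · filter_upwards [self_mem_nhdsWithin] with c hc using mul_pos hm hc

theorem jensen_defect_eq (hl : 0 < l) (hm : 0 < m)
    (heq : ∀ a > 0, ∀ b > 0, h (l * a + m * b) = l * h a + m * h b)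
    {a c : ℝ} (ha : 0 < a) (hc : 0 < c) :
    l * (h (l * a) - l * h a) = m * (h (m * c) - m * h c) := by
  have hla : 0 < l * a := mul_pos hl ha
  have hmc : 0 < m * c := mul_pos hm hc
  have hsplit : l * (l * a + m * 1) + m * (m * c) = l * (l * a) + m * (l * 1 + m * c) := by ring
  have hexpand := heq (l * a + m * 1) (by positivity) (m * c) hmc
  rw [hsplit, heq _ hla _ (by positivity), heq a ha 1 one_pos, heq 1 one_pos c hc] at hexpand
  linarith

theorem map_mul_of_jensen (hl : 0 < l) (hm : 0 < m)
    (hlim : Tendsto h (𝓝[>] 0) (𝓝 0))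
    (heq : ∀ a > 0, ∀ b > 0, h (l * a + m * b) = l * h a + m * h b) :
    (∀ a > 0, h (l * a) = l * h a) ∧ ∀ c > 0, h (m * c) = m * h c := by
  have hdefect_tendsto : Tendsto (fun c => m * (h (m * c) - m * h c)) (𝓝[>] 0) (𝓝 0) := by
    simpa using ((tendsto_comp_const_mul_nhdsGT_zero hlim hm).sub (hlim.const_mul m)).const_mul m
  have hleft : ∀ a > 0, l * (h (l * a) - l * h a) = 0 := fun a ha =>
    tendsto_nhds_unique (tendsto_const_nhds.congr' <| by
      filter_upwards [self_mem_nhdsWithin] with c hc using jensen_defect_eq hl hm heq ha hc)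
      hdefect_tendsto
  refine ⟨fun a ha => ?_, fun c hc => ?_⟩
  · simpa [hl.ne', sub_eq_zero] using hleft a ha
  · have := jensen_defect_eq hl hm heq one_pos hc
    rw [hleft 1 one_pos, eq_comm] at this
    simpa [hm.ne', sub_eq_zero] using this

theorem map_add_of_jensen (hl : 0 < l) (hm : 0 < m)
    (hlim : Tendsto h (𝓝[>] 0) (𝓝 0))
    (heq : ∀ a > 0, ∀ b > 0, h (l * a + m * b) = l * h a + m * h b)
    {x y : ℝ} (hx : 0 < x) (hy : 0 < y) :
    h (x + y) = h x + h y := by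
  obtain ⟨hmul_l, hmul_m⟩ := map_mul_of_jensen hl hm hlim heq
  have hxl : l * (x / l) = x := mul_div_cancel₀ x hl.ne'
  have hym : m * (y / m) = y := mul_div_cancel₀ y hm.ne'
  have := heq (x / l) (div_pos hx hl) (y / m) (div_pos hy hm)
  rwa [← hmul_l _ (div_pos hx hl), ← hmul_m _ (div_pos hy hm), hxl, hym] at this

end WeightedJensen

section AdditiveOnPos

variable {f : ℝ → ℝ}

theorem pos_of_map_add_of_strictMonoOn (hadd : ∀ x > 0, ∀ y > 0, f (x + y) = f x + f y)
    (hmono : StrictMonoOn f (Ioi 0)) {x : ℝ} (hx : 0 < x) : 0 < f x := by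
  have hx2 : 0 < x / 2 := half_pos hx
  have hlt : f (x / 2) < f x := hmono hx2 hx (half_lt_self hx)
  have hsum : f x = f (x / 2) + f (x / 2) := by rw [← hadd _ hx2 _ hx2, add_halves]
  linarith

theorem map_nat_mul_of_map_add (hadd : ∀ x > 0, ∀ y > 0, f (x + y) = f x + f y)
    {x : ℝ} (hx : 0 < x) {n : ℕ} (hn : 1 ≤ n) : f (n * x) = n * f x := by
  induction n, hn using Nat.le_induction with
  | base => simp
  | succ n hn ih =>
    have hnx : 0 < (n : ℝ) * x := mul_pos (by exact_mod_cast hn) hx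
    push_cast
    rw [add_one_mul, hadd _ hnx _ hx, ih, add_one_mul]

theorem map_rat_of_map_add (hadd : ∀ x > 0, ∀ y > 0, f (x + y) = f x + f y)
    {q : ℚ} (hq : 0 < q) : f q = q * f 1 := by
  have hnum_pos : 0 < q.num := Rat.num_pos.2 hq
  obtain ⟨a, ha⟩ : ∃ a : ℕ, (a : ℤ) = q.num := ⟨q.num.toNat, Int.toNat_of_nonneg hnum_pos.le⟩
  have ha1 : 1 ≤ a := by omega
  have hden : (q.den : ℝ) * q = a := by
    rw [Rat.cast_def, ← ha]; push_cast; field_simp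
  have hq' : (0 : ℝ) < q := by exact_mod_cast hq
  have hnum : f a = a * f 1 := by simpa using map_nat_mul_of_map_add hadd one_pos ha1
  have := map_nat_mul_of_map_add hadd hq' q.den_pos
  rw [hden, hnum, ← hden] at this
  have hd : (q.den : ℝ) ≠ 0 := by exact_mod_cast q.den_pos.ne'
  exact mul_left_cancel₀ hd (by rw [← this]; ring)

theorem eq_mul_of_map_add_of_strictMonoOn (hadd : ∀ x > 0, ∀ y > 0, f (x + y) = f x + f y)
    (hmono : StrictMonoOn f (Ioi 0)) {x : ℝ} (hx : 0 < x) : f x = x * f 1 := by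
  have hf1 : 0 < f 1 := pos_of_map_add_of_strictMonoOn hadd hmono one_pos
  have hfx : 0 < f x := pos_of_map_add_of_strictMonoOn hadd hmono hx
  suffices f x / f 1 = x from (div_eq_iff hf1.ne').1 this
  apply le_antisymm
  · refine le_of_forall_lt_rat_imp_le fun q hxq => ?_
    have hq : (0 : ℝ) < q := hx.trans hxq
    have := hmono.monotoneOn hx hq hxq.le
    rw [map_rat_of_map_add hadd (by exact_mod_cast hq)] at this
    rwa [div_le_iff₀ hf1]
  · refine le_of_forall_rat_lt_imp_le fun q hqx => ?_
    rcases le_or_gt (q : ℝ) 0 with hq | hq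
    · exact hq.trans (by positivity)
    · have := hmono.monotoneOn hq hx hqx.le
      rw [map_rat_of_map_add hadd (by exact_mod_cast hq)] at this
      rwa [le_div_iff₀ hf1]

end AdditiveOnPos

theorem jensen_equality_implies_linear_general
    (dm dn : ℝ) (hdm : 0 < dm) (hdn : 0 < dn)
    (h : ℝ → ℝ)
    (hmono : StrictMonoOn h (Set.Ioi (0 : ℝ)))
    (hlim : Filter.Tendsto h (nhdsWithin 0 (Set.Ioi (0 : ℝ))) (nhds 0))
    (heq : ∀ zm > (0 : ℝ), ∀ zn > (0 : ℝ),
      (dm + dn) * h ((dm * zm + dn * zn) / (dm + dn)) = dm * h zm + dn * h zn) :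
    ∃ r > (0 : ℝ), ∀ z > (0 : ℝ), h z = z / r := by
  have hd : 0 < dm + dn := add_pos hdm hdn
  have hjensen : ∀ a > 0, ∀ b > 0,
      h (dm / (dm + dn) * a + dn / (dm + dn) * b) =
        dm / (dm + dn) * h a + dn / (dm + dn) * h b := by
    intro a ha b hb
    have := heq a ha b hb
    rw [show dm / (dm + dn) * a + dn / (dm + dn) * b = (dm * a + dn * b) / (dm + dn) by ring]
    field_simp
    linarith
  have hadd : ∀ x > 0, ∀ y > 0, h (x + y) = h x + h y := fun x hx y hy =>
    map_add_of_jensen (div_pos hdm hd) (div_pos hdn hd) hlim hjensen hx hy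
  refine ⟨(h 1)⁻¹, inv_pos.2 (pos_of_map_add_of_strictMonoOn hadd hmono one_pos), ?_⟩
  intro z hz
  rw [eq_mul_of_map_add_of_strictMonoOn hadd hmono hz, div_inv_eq_mul]

/-- Lemma A.2: if a positive, strictly increasing `h` on `(0,∞)` with
`h → 0` at `0⁺` satisfies the weighted Jensen equality
`(dm + dn) · h((dm·zm + dn·zn)/(dm + dn)) = dm·h(zm) + dn·h(zn)`
for all positive `zm, zn`, then `h(z) = z / r` for some `r > 0`. -/
theorem jensen_equality_implies_linear
    (dm dn : ℝ) (hdm : 0 < dm) (hdn : 0 < dn)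
    (h : ℝ → ℝ)
    (hpos : ∀ x > (0 : ℝ), 0 < h x)
    (hmono : StrictMonoOn h (Set.Ioi (0 : ℝ)))
    (hlim : Filter.Tendsto h (nhdsWithin 0 (Set.Ioi (0 : ℝ))) (nhds 0))
    (heq : ∀ zm > (0 : ℝ), ∀ zn > (0 : ℝ),
      (dm + dn) * h ((dm * zm + dn * zn) / (dm + dn)) = dm * h zm + dn * h zn) :
    ∃ r > (0 : ℝ), ∀ z > (0 : ℝ), h z = z / r :=
  jensen_equality_implies_linear_general dm dn hdm hdn h hmono hlim heq
end

section
/- (Theorem 2, analytic core: neutrality forces Tullock technology.) Let K be a finite index set with at least two elements, let d_k > 0 for each k ∈ K, and for each k ∈ K let h_k: (0,∞) → (0,∞) be differentiable, strictly increasing, with h_k(x) → 0 as x → 0+. Suppose that for every z > 0 and every family (z_k)_{k∈K} of positive reals with Σ_{k∈K} d_k z_k = (Σ_{k∈K} d_k) · z, one has Σ_{k∈K} d_k · h_k(z_k)/h_k(z) = Σ_{k∈K} d_k. Then for each k ∈ K there exists r_k > 0 such that h_k(x) = x/r_k for all x > 0. -/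
/-!
Fix two distinct sizes `k ≠ j` and perturb the uniform profile `z` only at them: neutrality becomes
`p f(x)/f(z) + q g(y)/g(z) = p + q` whenever `p x + q y = (p + q) z`, with `f = h k`, `g = h j`.
Differentiating in `x` along this constraint and evaluating at `x = y = z` shows that `f` and `g`
have the same logarithmic derivative; feeding this back into the differentiated identity gives
`f'(x) = f'(z)` for every `z > p x / (p + q)`, so `f'` is constant on `(0, ∞)`. Hence `f` is affine,
and `f(0+) = 0` makes it linear with positive slope.
-/

open Filter Topology Function

theorem Finset.sum_update_update {ι α M : Type*} [DecidableEq ι] [AddCommGroup M]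
    {K : Finset ι} {k j : ι} (hk : k ∈ K) (hj : j ∈ K) (hkj : k ≠ j) (F : ι → α → M) (z x y : α) :
    ∑ m ∈ K, F m (update (update (fun _ ↦ z) k x) j y m)
      = ∑ m ∈ K, F m z + (F k x - F k z) + (F j y - F j z) := by
  have hdiff : ∑ m ∈ K, (F m (update (update (fun _ ↦ z) k x) j y m) - F m z)
      = (F k x - F k z) + (F j y - F j z) := by
    rw [Finset.sum_eq_add_of_mem k j hk hj hkj fun m _ hm ↦ by simp [hm.1, hm.2]]
    simp [hkj]
  rw [Finset.sum_sub_distrib, sub_eq_iff_eq_add'] at hdiff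
  rw [hdiff, add_assoc]

/-- Neutrality restricted to the profiles that differ from the uniform one only at two sizes,
with multiplicities `p`, `q` and inverse semi-elasticities `f`, `g`. -/
def IsNeutralPair (p q : ℝ) (f g : ℝ → ℝ) : Prop :=
  ∀ x > 0, ∀ y > 0, ∀ z > 0, p * x + q * y = (p + q) * z →
    p * (f x / f z) + q * (g y / g z) = p + q

theorem isNeutralPair_of_neutral {K : Finset ℕ} {d : ℕ → ℝ} {h : ℕ → ℝ → ℝ}
    (hpos : ∀ k ∈ K, ∀ x > (0 : ℝ), 0 < h k x)
    (hneut : ∀ z > (0 : ℝ), ∀ zf : ℕ → ℝ, (∀ k ∈ K, 0 < zf k) →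
      (∑ k ∈ K, d k * zf k) = (∑ k ∈ K, d k) * z →
      ∑ k ∈ K, d k * (h k (zf k) / h k z) = ∑ k ∈ K, d k)
    {k j : ℕ} (hk : k ∈ K) (hj : j ∈ K) (hkj : k ≠ j) :
    IsNeutralPair (d k) (d j) (h k) (h j) := by
  intro x hx y hy z hz hxyz
  set zf := update (update (fun _ ↦ z) k x) j y
  have hzf : ∀ m ∈ K, 0 < zf m := fun m _ ↦ by
    simp only [zf, update_apply]; split_ifs <;> assumption
  have hsum : ∑ m ∈ K, d m * zf m = (∑ m ∈ K, d m) * z := by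
    rw [Finset.sum_update_update hk hj hkj (fun m t ↦ d m * t), Finset.sum_mul]
    linear_combination hxyz
  have hself : ∑ m ∈ K, d m * (h m z / h m z) = ∑ m ∈ K, d m :=
    Finset.sum_congr rfl fun m hm ↦ by rw [div_self (hpos m hm z hz).ne', mul_one]
  have hneut_zf := hneut z hz zf hzf hsum
  rw [Finset.sum_update_update hk hj hkj (fun m t ↦ d m * (h m t / h m z)), hself,
    div_self (hpos k hk z hz).ne', div_self (hpos j hj z hz).ne'] at hneut_zf
  linear_combination hneut_zf

namespace IsNeutralPair

variable {p q : ℝ} {f g : ℝ → ℝ}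

theorem deriv_div_mul_eq (hpair : IsNeutralPair p q f g) (hp : 0 < p) (hq : 0 < q)
    (hf : ∀ x > 0, 0 < f x) (hg : ∀ x > 0, 0 < g x)
    (hfd : ∀ x > 0, DifferentiableAt ℝ f x) (hgd : ∀ x > 0, DifferentiableAt ℝ g x)
    {x y z : ℝ} (hx : 0 < x) (hy : 0 < y) (hz : 0 < z) (hxyz : p * x + q * y = (p + q) * z) :
    deriv f x / f z * (p + q) =
      p * (f x / f z) * logDeriv f z + q * (g y / g z) * logDeriv g z := by
  have hpq : 0 < p + q := add_pos hp hq
  set ζ : ℝ → ℝ := fun t ↦ (p * t + q * y) / (p + q)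
  have hζx : ζ x = z := by simp only [ζ]; field_simp; linarith
  have hζ : HasDerivAt ζ (p / (p + q)) x := by
    simpa using (((hasDerivAt_id x).const_mul p).add_const (q * y)).div_const (p + q)
  have hfζ : HasDerivAt (f ∘ ζ) (deriv f z * (p / (p + q))) x :=
    (hfd z hz).hasDerivAt.comp_of_eq x hζ hζx.symm
  have hgζ : HasDerivAt (g ∘ ζ) (deriv g z * (p / (p + q))) x :=
    (hgd z hz).hasDerivAt.comp_of_eq x hζ hζx.symm
  have hΦ := (((hfd x hx).hasDerivAt.div hfζ (by simpa [hζx] using (hf z hz).ne')).const_mul p).add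
    (((hasDerivAt_const x (g y)).div hgζ (by simpa [hζx] using (hg z hz).ne')).const_mul q)
  have hΦ_const : (fun t ↦ p * (f t / (f ∘ ζ) t) + q * (g y / (g ∘ ζ) t)) =ᶠ[𝓝 x]
      fun _ ↦ p + q := by
    filter_upwards [Ioi_mem_nhds hx] with t ht
    exact hpair t ht y hy (ζ t) (div_pos (add_pos (mul_pos hp ht) (mul_pos hq hy)) hpq)
      (by simp only [ζ]; field_simp)
  have hderiv := (hΦ.congr_of_eventuallyEq hΦ_const.symm).unique (hasDerivAt_const x (p + q))
  simp only [comp_apply, hζx] at hderiv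
  rw [logDeriv_apply, logDeriv_apply]
  have hfz := (hf z hz).ne'
  have hgz := (hg z hz).ne'
  field_simp at hderiv ⊢
  refine mul_left_cancel₀ hp.ne' ?_
  linear_combination hderiv

theorem logDeriv_eq (hpair : IsNeutralPair p q f g) (hp : 0 < p) (hq : 0 < q)
    (hf : ∀ x > 0, 0 < f x) (hg : ∀ x > 0, 0 < g x)
    (hfd : ∀ x > 0, DifferentiableAt ℝ f x) (hgd : ∀ x > 0, DifferentiableAt ℝ g x)
    {w : ℝ} (hw : 0 < w) : logDeriv f w = logDeriv g w := by
  have hderiv := hpair.deriv_div_mul_eq hp hq hf hg hfd hgd hw hw hw (by ring)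
  rw [div_self (hf w hw).ne', div_self (hg w hw).ne', ← logDeriv_apply] at hderiv
  have hdiff : q * (logDeriv f w - logDeriv g w) = 0 := by linear_combination hderiv
  exact sub_eq_zero.mp ((mul_eq_zero.mp hdiff).resolve_left hq.ne')

theorem deriv_eq (hpair : IsNeutralPair p q f g) (hp : 0 < p) (hq : 0 < q)
    (hf : ∀ x > 0, 0 < f x) (hg : ∀ x > 0, 0 < g x)
    (hfd : ∀ x > 0, DifferentiableAt ℝ f x) (hgd : ∀ x > 0, DifferentiableAt ℝ g x)
    {x y z : ℝ} (hx : 0 < x) (hy : 0 < y) (hz : 0 < z) (hxyz : p * x + q * y = (p + q) * z) :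
    deriv f x = deriv f z := by
  have hderiv : deriv f x / f z * (p + q) = deriv f z / f z * (p + q) := by
    rw [hpair.deriv_div_mul_eq hp hq hf hg hfd hgd hx hy hz hxyz,
      ← hpair.logDeriv_eq hp hq hf hg hfd hgd hz, ← hpair x hx y hy z hz hxyz, logDeriv_apply]
    ring
  have hfz := (hf z hz).ne'
  field_simp at hderiv
  exact hderiv

theorem deriv_eq_of_pos (hpair : IsNeutralPair p q f g) (hp : 0 < p) (hq : 0 < q)
    (hf : ∀ x > 0, 0 < f x) (hg : ∀ x > 0, 0 < g x)
    (hfd : ∀ x > 0, DifferentiableAt ℝ f x) (hgd : ∀ x > 0, DifferentiableAt ℝ g x)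
    {x w : ℝ} (hx : 0 < x) (hw : 0 < w) : deriv f x = deriv f w := by
  have to_sum : ∀ t > 0, t < x + w → deriv f t = deriv f (x + w) := fun t ht htxw ↦
    hpair.deriv_eq hp hq hf hg hfd hgd ht (y := ((p + q) * (x + w) - p * t) / q)
      (div_pos (by nlinarith) hq) (by positivity) (by field_simp; ring)
  rw [to_sum x hx (by linarith), to_sum w hw (by linarith)]

end IsNeutralPair

theorem eq_mul_of_deriv_eq_of_tendsto_zero {f : ℝ → ℝ} {c : ℝ}
    (hfd : ∀ x > 0, DifferentiableAt ℝ f x) (hderiv : ∀ x > 0, deriv f x = c)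
    (hlim : Tendsto f (𝓝[>] 0) (𝓝 0)) :
    ∀ x > 0, f x = c * x := by
  obtain ⟨e, he⟩ := isOpen_Ioi.exists_eq_add_of_deriv_eq isPreconnected_Ioi
    (fun x hx ↦ (hfd x hx).differentiableWithinAt) (differentiable_id.const_mul c).differentiableOn
    (g := fun x ↦ c * x) fun x hx ↦ by simp [hderiv x hx]
  have he0 : e = 0 := by
    refine tendsto_nhds_unique ?_ hlim
    have haffine : Tendsto (fun x ↦ c * x + e) (𝓝[>] 0) (𝓝 (c * 0 + e)) :=
      tendsto_nhdsWithin_of_tendsto_nhds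
        ((continuous_const_mul c).add continuous_const).continuousAt
    rw [mul_zero, zero_add] at haffine
    exact haffine.congr' (eventually_nhdsWithin_of_forall fun x hx ↦ (he hx).symm)
  intro x hx
  simpa [he0] using he hx

theorem neutrality_implies_tullock_general
    (K : Finset ℕ) (hK : 2 ≤ K.card)
    (d : ℕ → ℝ) (hd : ∀ k ∈ K, 0 < d k)
    (h : ℕ → ℝ → ℝ)
    (hpos : ∀ k ∈ K, ∀ x > (0 : ℝ), 0 < h k x)
    (hdiff : ∀ k ∈ K, ∀ x > (0 : ℝ), DifferentiableAt ℝ (h k) x)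
    (hlim : ∀ k ∈ K, Filter.Tendsto (h k) (nhdsWithin 0 (Set.Ioi (0 : ℝ))) (nhds 0))
    (hneut : ∀ z > (0 : ℝ), ∀ zf : ℕ → ℝ, (∀ k ∈ K, 0 < zf k) →
      (∑ k ∈ K, d k * zf k) = (∑ k ∈ K, d k) * z →
      ∑ k ∈ K, d k * (h k (zf k) / h k z) = ∑ k ∈ K, d k) :
    ∀ k ∈ K, ∃ r > (0 : ℝ), ∀ x > (0 : ℝ), h k x = x / r := by
  intro k hk
  obtain ⟨j, hj, hjk⟩ := Finset.exists_mem_ne (show 1 < K.card by omega) k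
  have hpair := isNeutralPair_of_neutral hpos hneut hk hj hjk.symm
  have hlin : ∀ x > 0, h k x = deriv (h k) 1 * x :=
    eq_mul_of_deriv_eq_of_tendsto_zero (hdiff k hk)
      (fun x hx ↦ hpair.deriv_eq_of_pos (hd k hk) (hd j hj) (hpos k hk) (hpos j hj)
        (hdiff k hk) (hdiff j hj) hx one_pos) (hlim k hk)
  have hslope : 0 < deriv (h k) 1 := by simpa [hlin 1 one_pos] using hpos k hk 1 one_pos
  refine ⟨(deriv (h k) 1)⁻¹, inv_pos.2 hslope, fun x hx ↦ ?_⟩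
  rw [hlin x hx, div_inv_eq_mul, mul_comm]

/-- Theorem 2, analytic core: if neutrality of effort discrimination holds for
all perturbed semi-symmetric effort profiles, then each inverse
semi-elasticity `h k` is linear, i.e. `h k x = x / r k` for some `r k > 0`
(so each contest production function is of Tullock form). -/
theorem neutrality_implies_tullock
    (K : Finset ℕ) (hK : 2 ≤ K.card)
    (d : ℕ → ℝ) (hd : ∀ k ∈ K, 0 < d k)
    (h : ℕ → ℝ → ℝ)
    (hpos : ∀ k ∈ K, ∀ x > (0 : ℝ), 0 < h k x)
    (hdiff : ∀ k ∈ K, ∀ x > (0 : ℝ), DifferentiableAt ℝ (h k) x)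
    (hmono : ∀ k ∈ K, StrictMonoOn (h k) (Set.Ioi (0 : ℝ)))
    (hlim : ∀ k ∈ K, Filter.Tendsto (h k) (nhdsWithin 0 (Set.Ioi (0 : ℝ))) (nhds 0))
    (hneut : ∀ z > (0 : ℝ), ∀ zf : ℕ → ℝ, (∀ k ∈ K, 0 < zf k) →
      (∑ k ∈ K, d k * zf k) = (∑ k ∈ K, d k) * z →
      ∑ k ∈ K, d k * (h k (zf k) / h k z) = ∑ k ∈ K, d k) :
    ∀ k ∈ K, ∃ r > (0 : ℝ), ∀ x > (0 : ℝ), h k x = x / r :=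
  neutrality_implies_tullock_general K hK d hd h hpos hdiff hlim hneut
end
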